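/- If G is an ancestral graph satisfying the boundary containment property and π is a path of minimal length among all paths m-connecting v and w given C, then every non-endpoint vertex on π is a collider on π. -/

import Mathlib

/-- Possible edge types between an ordered pair of distinct vertices of a
simple mixed graph.  `arrowTo` at `(v, w)` means `v → w`, `arrowFrom` means
`v ← w`, `undir` means `v − w` and `bidir` means `v ↔ w`. -/
inductive EType : Type
  | none | undir | arrowTo | arrowFrom | bidir
deriving DecidableEq

/-- The edge type seen from the reversed ordered pair of vertices. -/
def EType.mirror : EType → EType
  | .none => .none
  | .undir => .undir
  | .arrowTo => .arrowFrom
  | .arrowFrom => .arrowTo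
  | .bidir => .bidir

/-- A simple mixed graph: at most one edge (undirected, directed or
bi-directed) between any two distinct vertices, and no self loops. -/
structure MixedGraph (V : Type) where
  E : V → V → EType
  no_loop : ∀ v, E v v = .none
  symm : ∀ v w, E w v = (E v w).mirror

/-- `(a, b, c)` are three consecutive vertices on the path `p`. -/
def ConsecTriple {V : Type} (p : List V) (a b c : V) : Prop :=
  ∃ l1 l2, p = l1 ++ a :: b :: c :: l2

namespace MixedGraph

variable {V : Type} (G : MixedGraph V)

/-- `v − w` is an edge of `G`. -/
def Undir (v w : V) : Prop := G.E v w = .undir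

/-- `v → w` is an edge of `G`. -/
def Dir (v w : V) : Prop := G.E v w = .arrowTo

/-- `v ↔ w` is an edge of `G`. -/
def Bidir (v w : V) : Prop := G.E v w = .bidir

/-- `v` and `w` are adjacent (joined by some edge). -/
def Adj (v w : V) : Prop := G.E v w ≠ .none

/-- The edge between `a` and `b` has an arrowhead at `b`. -/
def HeadAt (a b : V) : Prop := G.E a b = .arrowTo ∨ G.E a b = .bidir

/-- Closed boundary: `v` together with its adjacent vertices. -/
def Bd (v : V) : Set V := insert v {w | G.Adj v w}

/-- A set of vertices is complete if all of its pairs of distinct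
vertices are adjacent. -/
def Complete (S : Set V) : Prop := ∀ v ∈ S, ∀ w ∈ S, v ≠ w → G.Adj v w

/-- A vertex is simplicial if its closed boundary is complete. -/
def Simplicial (v : V) : Prop := G.Complete (G.Bd v)

/-- `v` is an ancestor of `w`: `v = w` or there is a directed path from
`v` to `w`. -/
def Anc (v w : V) : Prop := Relation.ReflTransGen G.Dir v w

/-- The set of ancestors of vertices in `C`. -/
def anSet (C : Set V) : Set V := {v | ∃ c ∈ C, G.Anc v c}

/-- `G` is an ancestral graph. -/
def Ancestral : Prop :=
  (∀ v w, G.Dir v w → ¬ G.Anc w v) ∧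
  (∀ v w, G.Undir v w → ∀ u, ¬ G.HeadAt u v) ∧
  (∀ v w, G.Bidir v w → ¬ G.Anc v w)

/-- The boundary containment property. -/
def BdContain : Prop :=
  (∀ v w, G.Undir v w → G.Bd v = G.Bd w) ∧
  (∀ v w, G.Dir v w → G.Bd v ⊆ G.Bd w)

/-- `b` is a collider between consecutive neighbours `a` and `c`. -/
def Collider (a b c : V) : Prop := G.HeadAt a b ∧ G.HeadAt c b

/-- A path: a list of distinct vertices, consecutive ones adjacent. -/
def IsPath (p : List V) : Prop := p.Nodup ∧ p.Chain' G.Adj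

/-- `p` is an m-connecting path given `C`: every non-collider on it is
outside `C` and every collider on it is an ancestor of `C`. -/
def IsMConnPath (C : Set V) (p : List V) : Prop :=
  G.IsPath p ∧
  ∀ a b c, ConsecTriple p a b c →
    (G.Collider a b c → b ∈ G.anSet C) ∧ (¬ G.Collider a b c → b ∉ C)

/-- `v` and `w` are m-connected given `C`. -/
def MConn (v w : V) (C : Set V) : Prop :=
  ∃ p, G.IsMConnPath C p ∧ p.head? = some v ∧ p.getLast? = some w

/-- `v` and `w` are m-separated given `C`. -/
def MSep (v w : V) (C : Set V) : Prop := ¬ G.MConn v w C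

/-- A maximal (ancestral) graph: every pair of distinct non-adjacent
vertices is m-separated given some set. -/
def Maximal : Prop :=
  ∀ v w, v ≠ w → ¬ G.Adj v w → ∃ C : Set V, v ∉ C ∧ w ∉ C ∧ G.MSep v w C

/-- `G` is a bi-directed graph. -/
def Bidirected : Prop := ∀ v w, G.E v w = .none ∨ G.E v w = .bidir

/-- `G` is an undirected graph. -/
def UndirectedG : Prop := ∀ v w, G.E v w = .none ∨ G.E v w = .undir

/-- `G` is a directed acyclic graph. -/
def IsDAG : Prop :=
  (∀ v w, G.E v w = .none ∨ G.E v w = .arrowTo ∨ G.E v w = .arrowFrom) ∧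
  (∀ v w, G.Dir v w → ¬ G.Anc w v)

/-- `G` and `H` have the same skeleton. -/
def SameSkeleton (H : MixedGraph V) : Prop := ∀ v w, G.Adj v w ↔ H.Adj v w

/-- `G` and `H` are Markov equivalent: their m-separation relations
coincide. -/
def MarkovEquiv (H : MixedGraph V) : Prop :=
  ∀ v w (C : Set V), v ≠ w → v ∉ C → w ∉ C → (G.MSep v w C ↔ H.MSep v w C)

open Classical in
/-- The edge map obtained from `G` by dropping all arrowheads at
simplicial vertices. -/
noncomputable def dropE (v w : V) : EType :=
  match G.E v w with
  | .none => .none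
  | .undir => .undir
  | .arrowTo => if G.Simplicial w then .undir else .arrowTo
  | .arrowFrom => if G.Simplicial v then .undir else .arrowFrom
  | .bidir =>
      if G.Simplicial v then (if G.Simplicial w then .undir else .arrowTo)
      else (if G.Simplicial w then .arrowFrom else .bidir)

/-- The graph obtained from `G` by dropping all arrowheads at simplicial
vertices; for a bi-directed graph `G` this is the simplicial graph `Gˢ`. -/
noncomputable def drop : MixedGraph V where
  E := G.dropE
  no_loop v := by simp [dropE, G.no_loop]
  symm v w := by
    unfold dropE
    rw [G.symm v w]
    cases h : G.E v w <;>
      simp only [EType.mirror] <;> split_ifs <;> simp_all [EType.mirror]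

open Classical in
/-- The edge map of the minimally oriented graph `G^min_<`: starting from
the simplicial graph, each bi-directed edge `v ↔ w` with `Bd v ⊆ Bd w`
and `v < w` is replaced by `v → w`. -/
noncomputable def gminE [LinearOrder V] (v w : V) : EType :=
  match G.dropE v w with
  | .bidir =>
      if G.Bd v ⊆ G.Bd w ∧ v < w then .arrowTo
      else if G.Bd w ⊆ G.Bd v ∧ w < v then .arrowFrom
      else .bidir
  | e => e

/-- The graph `G^min_<` produced by Algorithm 4.2 from `G` and the total
order on `V`. -/
noncomputable def gmin [LinearOrder V] : MixedGraph V where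
  E := G.gminE
  no_loop v := by
    have h := G.drop.no_loop v
    simp only [drop] at h
    simp [gminE, h]
  symm v w := by
    have h := G.drop.symm v w
    simp only [drop] at h
    unfold gminE
    rw [h]
    cases hE : G.dropE v w <;> simp only [EType.mirror]
    case bidir =>
      by_cases c1 : G.Bd v ⊆ G.Bd w ∧ v < w
      · have c2 : ¬ (G.Bd w ⊆ G.Bd v ∧ w < v) := fun h' => lt_asymm c1.2 h'.2
        simp [c1, c2, EType.mirror]
      · by_cases c2 : G.Bd w ⊆ G.Bd v ∧ w < v
        · simp [c1, c2, EType.mirror]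
        · simp [c1, c2, EType.mirror]

/-- Total number of arrowheads of `G`: the number of directed edges plus
twice the number of bi-directed edges. -/
noncomputable def arr : ℕ :=
  {p : V × V | G.Dir p.1 p.2}.ncard + {p : V × V | G.Bidir p.1 p.2}.ncard

end MixedGraph

/-- `Gm` is a minimally oriented graph for `G`. -/
def MinOriented {V : Type} (G Gm : MixedGraph V) : Prop :=
  Gm.Ancestral ∧ Gm.Maximal ∧ G.MarkovEquiv Gm ∧
  ∀ H : MixedGraph V, H.Ancestral → H.Maximal → G.MarkovEquiv H → Gm.arr ≤ H.arr

/-!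
If `b` is a non-collider between `a` and `c` on `π`, one of the edges at `b` has no arrowhead
at `b`, so boundary containment makes `a` and `c` adjacent, and the shortcut `a – c` is a
candidate for a shorter path. The shortcut can block its end `a` only when `a ∈ C` is a collider
of `π` turned into a non-collider, which forces `a → c`; then `Bd a ⊆ Bd c`, so the predecessor
of `a` is adjacent to `c` and the shortcut moves one step outward (symmetrically at `c`).
Ancestrality shows that a moved shortcut never turns an end into a collider outside `an(C)`, so
the process stops at an m-connecting path shorter than `π`.
-/

theorem EType.mirror_eq_none {e : EType} : e.mirror = .none ↔ e = .none := by
  cases e <;> simp [EType.mirror]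

theorem ConsecTriple.append_right {V : Type} {A : List V} {a b c : V} (B : List V)
    (h : ConsecTriple A a b c) : ConsecTriple (A ++ B) a b c :=
  let ⟨X, Y, hA⟩ := h
  ⟨X, Y ++ B, by simp [hA]⟩

theorem ConsecTriple.append_left {V : Type} {B : List V} {a b c : V} (A : List V)
    (h : ConsecTriple B a b c) : ConsecTriple (A ++ B) a b c :=
  let ⟨X, Y, hB⟩ := h
  ⟨A ++ X, Y, by simp [hB]⟩

theorem ConsecTriple.of_append {V : Type} {A B : List V} {a b c : V}
    (h : ConsecTriple (A ++ B) a b c) :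
    ConsecTriple A a b c ∨ ConsecTriple B a b c ∨
      (A.dropLast.getLast? = some a ∧ A.getLast? = some b ∧ B.head? = some c) ∨
      (A.getLast? = some a ∧ B.head? = some b ∧ B.tail.head? = some c) := by
  obtain ⟨X, Y, h⟩ := h
  rcases List.append_eq_append_iff.mp h with ⟨Z, -, rfl⟩ | ⟨Z, rfl, hZ⟩
  · exact .inr (.inl ⟨Z, Y, rfl⟩)
  rcases Z with _ | ⟨x, _ | ⟨y, _ | ⟨z, Z⟩⟩⟩
  · exact .inr (.inl ⟨[], Y, by simpa using hZ.symm⟩)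
  · obtain ⟨rfl, rfl⟩ := by simpa using hZ
    simp
  · obtain ⟨rfl, rfl, rfl⟩ := by simpa using hZ
    simp
  · obtain ⟨rfl, rfl, rfl, -⟩ := by simpa using hZ
    exact .inl ⟨X, Z, rfl⟩

theorem List.Nodup.ne_of_eq_append_cons {α : Type*} {l X Y : List α} {a b : α} (h : l.Nodup)
    (hl : l = X ++ a :: Y) (hb : b ∈ Y) : a ≠ b := by
  rintro rfl
  subst hl
  exact (List.nodup_cons.mp (List.nodup_append.mp h).2.1).1 hb

namespace MixedGraph

variable {V : Type} {G : MixedGraph V} {C : Set V} {a b c m s t u : V}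

theorem Adj.symm (h : G.Adj s t) : G.Adj t s := by
  simpa [Adj, G.symm s t, EType.mirror_eq_none] using h

theorem Undir.symm (h : G.Undir s t) : G.Undir t s := by
  rw [Undir, G.symm, h]
  rfl

theorem Bidir.symm (h : G.Bidir s t) : G.Bidir t s := by
  rw [Bidir, G.symm, h]
  rfl

theorem Dir.headAt (h : G.Dir s t) : G.HeadAt s t := .inl h

theorem undir_or_dir_of_not_headAt (hst : G.Adj s t) (h : ¬ G.HeadAt s t) :
    G.Undir s t ∨ G.Dir t s := by
  simp only [Adj, HeadAt, Undir, Dir, G.symm s t] at *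
  cases he : G.E s t <;> simp_all [EType.mirror]

theorem Ancestral.not_headAt_of_anc (hA : G.Ancestral) (h : G.Anc s t) : ¬ G.HeadAt t s
  | .inl hts => hA.1 t s hts h
  | .inr hts => hA.2.2 s t (Bidir.symm hts) h

theorem Ancestral.dir_of_not_headAt (hA : G.Ancestral) (hst : G.Adj s t)
    (hts : ¬ G.HeadAt t s) (hus : G.HeadAt u s) : G.Dir s t :=
  (undir_or_dir_of_not_headAt hst.symm hts).resolve_left fun h => hA.2.1 s t h.symm u hus

theorem adj_of_bd_subset (h : G.Bd t ⊆ G.Bd s) (htu : G.Adj t u) (hsu : s ≠ u) :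
    G.Adj s u :=
  (h (Or.inr htu)).resolve_left hsu.symm

theorem BdContain.bd_subset_of_not_headAt (hB : G.BdContain) (hst : G.Adj s t)
    (h : ¬ G.HeadAt s t) : G.Bd t ⊆ G.Bd s := by
  rcases undir_or_dir_of_not_headAt hst h with h | h
  · exact (hB.1 s t h).ge
  · exact hB.2 t s h

theorem collider_comm : G.Collider a b c ↔ G.Collider c b a := and_comm

theorem BdContain.adj_of_not_collider (hB : G.BdContain) (hab : G.Adj a b) (hbc : G.Adj b c)
    (hac : a ≠ c) (hnc : ¬ G.Collider a b c) : G.Adj a c := by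
  by_cases hcb : G.HeadAt c b
  · exact adj_of_bd_subset (hB.bd_subset_of_not_headAt hab fun hab => hnc ⟨hab, hcb⟩) hbc hac
  · exact (adj_of_bd_subset (hB.bd_subset_of_not_headAt hbc.symm hcb) hab.symm hac.symm).symm

def Unblocked (C : Set V) (a b c : V) : Prop :=
  (G.Collider a b c → b ∈ G.anSet C) ∧ (¬ G.Collider a b c → b ∉ C)

theorem IsMConnPath.unblocked {p : List V} (hp : G.IsMConnPath C p) (h : ConsecTriple p a b c) :
    G.Unblocked C a b c :=
  hp.2 a b c h

theorem Unblocked.symm (h : G.Unblocked C a b c) : G.Unblocked C c b a := by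
  unfold Unblocked at *
  rwa [collider_comm]

/-- The invariant at an end `s` of a shortcut `s – t` that bypasses the vertex `m` following `s`
on a path: should the shortcut make `s` a collider, `s` stays unblocked. -/
def ShortcutSafe (C : Set V) (s m t : V) : Prop :=
  G.Dir s m → G.HeadAt t s → s ∈ G.anSet C

theorem shortcutSafe_of_not_collider (hA : G.Ancestral) (hbc : G.Adj b c)
    (hnc : ¬ G.Collider a b c) : G.ShortcutSafe C a b c := by
  intro hab hca
  have hbc : G.Dir b c :=
    hA.dir_of_not_headAt hbc (fun hcb => hnc ⟨hab.headAt, hcb⟩) hab.headAt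
  exact absurd hca (hA.not_headAt_of_anc (.head hab (.single hbc)))

theorem unblocked_or_mem_and_dir (hA : G.Ancestral) (hsm : G.Adj s m) (hst : G.Adj s t)
    (hold : G.Unblocked C u s m) (hsafe : G.ShortcutSafe C s m t) :
    G.Unblocked C u s t ∨ s ∈ C ∧ G.Dir s t := by
  by_cases hus : G.HeadAt u s
  · by_cases hts : G.HeadAt t s
    · refine .inl ⟨fun _ => ?_, fun h => absurd ⟨hus, hts⟩ h⟩
      by_cases hms : G.HeadAt m s
      · exact hold.1 ⟨hus, hms⟩
      · exact hsafe (hA.dir_of_not_headAt hsm hms hus) hts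
    · by_cases hsC : s ∈ C
      · exact .inr ⟨hsC, hA.dir_of_not_headAt hst hts hus⟩
      · exact .inl ⟨fun h => absurd h.2 hts, fun _ => hsC⟩
  · exact .inl ⟨fun h => absurd h.1 hus, fun _ => hold.2 fun h => hus h.1⟩

/-- If the shortcut `s – t` blocks `s`, then `s ∈ C` and `s → t`, so boundary containment
moves the shortcut one step further out, to the predecessor `u` of `s`. -/
theorem extend_shortcut_of_not_unblocked (hA : G.Ancestral) (hB : G.BdContain)
    (hus : G.Adj u s) (hsm : G.Adj s m) (hst : G.Adj s t) (hut : u ≠ t)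
    (hold : G.Unblocked C u s m) (hnew : ¬ G.Unblocked C u s t)
    (hsafe : G.ShortcutSafe C s m t) :
    G.Adj u t ∧ G.ShortcutSafe C u s t ∧
      ∀ m', G.ShortcutSafe C t m' s → G.ShortcutSafe C t m' u := by
  obtain ⟨hsC, hdir⟩ := (unblocked_or_mem_and_dir hA hsm hst hold hsafe).resolve_left hnew
  exact ⟨(adj_of_bd_subset (hB.2 s t hdir) hus.symm hut.symm).symm,
    fun hus _ => ⟨s, hsC, .single hus⟩, fun _ h htm _ => h htm hdir.headAt⟩

theorem IsPath.adj {p X Y : List V} (hp : G.IsPath p) (h : p = X ++ a :: b :: Y) :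
    G.Adj a b := by
  subst h
  exact List.isChain_pair.mp (hp.2.infix ⟨X, Y, by simp⟩)

theorem IsMConnPath.splice {L M R : List V} (hp : G.IsMConnPath C (L ++ s :: (M ++ t :: R)))
    (hst : G.Adj s t) (hs : ∀ u ∈ L.getLast?, G.Unblocked C u s t)
    (ht : ∀ u ∈ R.head?, G.Unblocked C s t u) : G.IsMConnPath C (L ++ s :: t :: R) := by
  obtain ⟨⟨hnd, hch⟩, htr⟩ := hp
  have hpre : L ++ s :: (M ++ t :: R) = (L ++ [s]) ++ (M ++ t :: R) := by simp
  have hsuf : L ++ s :: (M ++ t :: R) = (L ++ s :: M) ++ (t :: R) := by simp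
  have heq : L ++ s :: t :: R = (L ++ [s]) ++ (t :: R) := by simp
  refine ⟨⟨hnd.sublist ((((List.sublist_append_right M _).cons_cons s)).append_left L), ?_⟩, ?_⟩
  · rw [heq]
    refine List.isChain_append.2 ⟨hch.infix ⟨[], M ++ t :: R, by simp⟩,
      hch.infix ⟨L ++ s :: M, [], by simp⟩, by simpa using hst⟩
  · intro a b c h
    rw [heq] at h
    rcases h.of_append with h | h | ⟨ha, hb, hc⟩ | ⟨ha, hb, hc⟩
    · exact htr a b c (hpre ▸ h.append_right _)
    · exact htr a b c (hsuf ▸ h.append_left _)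
    · simp only [List.dropLast_concat, List.getLast?_concat, List.head?_cons,
        Option.some.injEq] at ha hb hc
      subst hb hc
      exact hs a ha
    · simp only [List.getLast?_concat, List.head?_cons, List.tail_cons,
        Option.some.injEq] at ha hb hc
      subst ha hb
      exact ht c hc

theorem IsMConnPath.exists_shorter (hA : G.Ancestral) (hB : G.BdContain) {p : List V}
    (hp : G.IsMConnPath C p) (L : List V) (s : V) (M : List V) (t : V) (R : List V)
    (hpLR : p = L ++ s :: (M ++ t :: R)) (hM : M ≠ []) (hst : G.Adj s t)
    (hs : ∀ m ∈ M.head?, G.ShortcutSafe C s m t) (ht : ∀ m ∈ M.getLast?, G.ShortcutSafe C t m s) :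
    ∃ q, G.IsMConnPath C q ∧ q.head? = p.head? ∧ q.getLast? = p.getLast? ∧
      q.length < p.length := by
  by_cases hLs : ∃ u ∈ L.getLast?, ¬ G.Unblocked C u s t
  · obtain ⟨u, hu, hnew⟩ := hLs
    obtain ⟨L, rfl⟩ := List.getLast?_eq_some_iff.mp hu
    obtain ⟨m, M, rfl⟩ := List.exists_cons_of_ne_nil hM
    obtain ⟨hut, hsafe, hsafe'⟩ := extend_shortcut_of_not_unblocked hA hB
      (hp.1.adj (X := L) (Y := m :: (M ++ t :: R)) (by simp [hpLR]))
      (hp.1.adj (X := L ++ [u]) (Y := M ++ t :: R) (by simp [hpLR])) hst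
      (hp.1.1.ne_of_eq_append_cons (X := L) (Y := s :: m :: (M ++ t :: R)) (by simp [hpLR])
        (by simp))
      (hp.unblocked ⟨L, M ++ t :: R, by simp [hpLR]⟩) hnew (hs m rfl)
    exact hp.exists_shorter hA hB L u (s :: m :: M) t R (by simp [hpLR]) (List.cons_ne_nil _ _)
      hut (by simpa using hsafe) (fun m' hm' => hsafe' m' (ht m' (by simpa using hm')))
  by_cases htR : ∃ u ∈ R.head?, ¬ G.Unblocked C s t u
  · obtain ⟨u, hu, hnew⟩ := htR
    obtain ⟨R, rfl⟩ := List.head?_eq_some_iff.mp hu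
    obtain ⟨M, m, rfl⟩ := (List.eq_nil_or_concat' M).resolve_left hM
    obtain ⟨hus, hsafe, hsafe'⟩ := extend_shortcut_of_not_unblocked hA hB
      (hp.1.adj (X := L ++ s :: M ++ [m]) (Y := R) (by simp [hpLR])).symm
      (hp.1.adj (X := L ++ s :: M) (Y := u :: R) (by simp [hpLR])).symm hst.symm
      (hp.1.1.ne_of_eq_append_cons (X := L) (Y := M ++ [m, t, u] ++ R) (by simp [hpLR])
        (by simp)).symm
      (hp.unblocked ⟨L ++ s :: M, R, by simp [hpLR]⟩).symm (fun h => hnew h.symm) (ht m (by simp))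
    exact hp.exists_shorter hA hB L s (M ++ [m, t]) u R (by simp [hpLR]) (by simp)
      hus.symm (fun m' hm' => hsafe' m' (hs m' (by simpa using hm'))) (by simpa using hsafe)
  push Not at hLs htR
  refine ⟨L ++ s :: t :: R, hpLR ▸ hp |>.splice hst hLs htR, ?_, ?_, ?_⟩ <;>
    subst hpLR
  · cases L <;> simp
  · simp [List.getLast?_cons]
  · simpa using List.length_pos_of_ne_nil hM
termination_by L.length + R.length

end MixedGraph

open MixedGraph in
/-- In an ancestral graph with the boundary containment
property, every non-endpoint vertex on a minimal-length m-connecting path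
is a collider. -/
theorem stmt4 {V : Type} (G : MixedGraph V) (hA : G.Ancestral) (hB : G.BdContain)
    (v w : V) (C : Set V) (p : List V)
    (hp : G.IsMConnPath C p) (hh : p.head? = some v) (hl : p.getLast? = some w)
    (hmin : ∀ q, G.IsMConnPath C q → q.head? = some v → q.getLast? = some w →
      p.length ≤ q.length) :
    ∀ a b c, ConsecTriple p a b c → G.Collider a b c := by
  rintro a b c ⟨l1, l2, rfl⟩
  by_contra hnc
  have hab : G.Adj a b := hp.1.adj (X := l1) (Y := c :: l2) rfl
  have hbc : G.Adj b c := hp.1.adj (X := l1 ++ [a]) (Y := l2) (by simp)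
  have hac : a ≠ c := hp.1.1.ne_of_eq_append_cons (X := l1) (Y := b :: c :: l2) rfl (by simp)
  obtain ⟨q, hq, hqh, hql, hlt⟩ := hp.exists_shorter hA hB l1 a [b] c l2 rfl
    (List.cons_ne_nil _ _) (hB.adj_of_not_collider hab hbc hac hnc)
    (by simpa using shortcutSafe_of_not_collider hA hbc hnc)
    (by simpa using shortcutSafe_of_not_collider hA hab.symm (mt collider_comm.1 hnc))
  exact (hmin q hq (hqh.trans hh) (hql.trans hl)).not_gt hlt
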